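/- arXiv:1602.05732 — 2 statements merged into one kernel-verified Lean document; each statement's English description precedes it below -/
import Mathlib

section
/- Algebraic core of the equimultiplicity theorem: let n ≥ 1, let w : Fin n → ℕ with w i ≥ 1 for every i, let d ∈ ℕ, and let f₀ ∈ MvPolynomial (Fin n) ℂ be nonzero and weighted homogeneous of degree d with respect to w. Let i₀ be an index with w i₀ ≤ w i for all i, suppose w i₀ divides d, and set m := d / (w i₀). Let g₁, …, g_{j₀} ∈ MvPolynomial (Fin n) ℂ and for t ∈ ℂ set f_t := f₀ + ∑_{j=1}^{j₀} t^j • g_j. Assume there exists ε₀ > 0 such that for all t with ‖t‖ < ε₀ one has f_t + X_{i₀}^m ≠ 0 and ord₀(f_t + X_{i₀}^m) = ord₀(f₀ + X_{i₀}^m). Then there exists ε > 0 such that for all t with ‖t‖ < ε, f_t ≠ 0 and ord₀(f_t) = ord₀(f₀); that is, the family {f_t} is equimultiple at the origin. -/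
/-- The order of a multivariate polynomial at the origin: the minimum total degree
of a monomial appearing in it (0 if the polynomial is 0, by convention `sInf ∅ = 0`). -/
noncomputable def ord0 {n : ℕ} (f : MvPolynomial (Fin n) ℂ) : ℕ :=
  sInf ((fun α : Fin n →₀ ℕ => ∑ i, α i) '' f.support)

/-!
Weighted homogeneity bounds every monomial of `f₀` by total degree `d / w i₀ = m`, so adding
`X i₀ ^ m` does not change the order of `f₀`. A monomial of `f₀` of minimal degree keeps a
nonzero coefficient in `f t` for small `t`, whence `ord₀ (f t) ≤ ord₀ f₀`. If the inequality
were strict, `ord₀ (f t) < m` and the term `X i₀ ^ m` could not affect the order of `f t` either,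
so `ord₀ (f t + X i₀ ^ m) = ord₀ (f t) < ord₀ f₀ = ord₀ (f₀ + X i₀ ^ m)`, a contradiction.
-/

open MvPolynomial Filter Topology

theorem Finsupp.degree_mul_le_weight {σ : Type*} (w : σ → ℕ) {k : ℕ} (hk : ∀ i, k ≤ w i)
    (α : σ →₀ ℕ) : α.degree * k ≤ weight w α := by
  rw [degree_apply, weight_apply, Finset.sum_mul]
  exact Finset.sum_le_sum fun i _ => by simpa using Nat.mul_le_mul_left (α i) (hk i)

theorem MvPolynomial.IsWeightedHomogeneous.totalDegree_le_div {σ R : Type*} [CommSemiring R]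
    {w : σ → ℕ} {φ : MvPolynomial σ R} {d k : ℕ} (hφ : IsWeightedHomogeneous w φ d)
    (hk : 0 < k) (hkw : ∀ i, k ≤ w i) : φ.totalDegree ≤ d / k :=
  Finset.sup_le fun α hα => (Nat.le_div_iff_mul_le hk).2 <|
    hφ (mem_support_iff.1 hα) ▸ Finsupp.degree_mul_le_weight w hkw α

section Perturbation

variable {σ K : Type*} [CommRing K] (f₀ : MvPolynomial σ K) (g : ℕ → MvPolynomial σ K)
  {s : Finset ℕ}

theorem add_sum_zero_pow_smul (hs : 0 ∉ s) : f₀ + ∑ j ∈ s, (0 : K) ^ j • g j = f₀ := by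
  rw [add_eq_left]
  exact Finset.sum_eq_zero fun j hj => by rw [zero_pow (ne_of_mem_of_not_mem hj hs), zero_smul]

theorem eventually_coeff_add_sum_pow_smul_ne_zero [TopologicalSpace K] [IsTopologicalRing K]
    [T1Space K] (hs : 0 ∉ s) {α : σ →₀ ℕ} (hα : coeff α f₀ ≠ 0) :
    ∀ᶠ t in 𝓝 (0 : K), coeff α (f₀ + ∑ j ∈ s, t ^ j • g j) ≠ 0 := by
  have hcont : Continuous fun t : K => coeff α (f₀ + ∑ j ∈ s, t ^ j • g j) := by
    simp only [coeff_add, coeff_sum, coeff_smul, smul_eq_mul]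
    fun_prop
  exact hcont.continuousAt.eventually_ne (by rwa [add_sum_zero_pow_smul f₀ g hs])

end Perturbation

section Order

variable {n : ℕ} {f p q : MvPolynomial (Fin n) ℂ} {α : Fin n →₀ ℕ}

theorem ord0_eq_sInf_degree (f : MvPolynomial (Fin n) ℂ) :
    ord0 f = sInf (Finsupp.degree '' (f.support : Set (Fin n →₀ ℕ))) := by
  simp only [ord0, Finsupp.degree_eq_sum]

theorem ord0_le_degree (hα : α ∈ f.support) : ord0 f ≤ α.degree :=
  ord0_eq_sInf_degree f ▸ Nat.sInf_le ⟨α, hα, rfl⟩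

theorem exists_degree_eq_ord0 (hf : f ≠ 0) : ∃ α ∈ f.support, α.degree = ord0 f := by
  rw [ord0_eq_sInf_degree]
  exact Nat.sInf_mem ((Finset.coe_nonempty.2 (support_nonempty.2 hf)).image _)

theorem le_ord0 {k : ℕ} (hf : f ≠ 0) (h : ∀ α ∈ f.support, k ≤ α.degree) : k ≤ ord0 f := by
  obtain ⟨α, hα, hαf⟩ := exists_degree_eq_ord0 hf
  exact hαf ▸ h α hα

theorem ord0_le_totalDegree (hf : f ≠ 0) : ord0 f ≤ f.totalDegree := by
  obtain ⟨α, hα, hαf⟩ := exists_degree_eq_ord0 hf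
  exact hαf ▸ le_totalDegree hα

theorem ord0_X_pow (i : Fin n) (m : ℕ) : ord0 (X i ^ m : MvPolynomial (Fin n) ℂ) = m := by
  simp [ord0_eq_sInf_degree, X_pow_eq_monomial, support_monomial]

theorem min_ord0_le_ord0_add (hpq : p + q ≠ 0) : min (ord0 p) (ord0 q) ≤ ord0 (p + q) := by
  refine le_ord0 hpq fun α hα => ?_
  rcases Finset.mem_union.1 (support_add hα) with hp | hq
  · exact min_le_of_left_le (ord0_le_degree hp)
  · exact min_le_of_right_le (ord0_le_degree hq)

theorem ord0_add_of_lt (hp : p ≠ 0) (h : ord0 p < ord0 q) : ord0 (p + q) = ord0 p := by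
  obtain ⟨α, hα, hαp⟩ := exists_degree_eq_ord0 hp
  have hαq : α ∉ q.support := fun hq => (ord0_le_degree hq).not_gt (hαp ▸ h)
  have hαpq : α ∈ (p + q).support := by
    rw [mem_support_iff, coeff_add, notMem_support_iff.1 hαq, add_zero]
    exact mem_support_iff.1 hα
  have hpq : p + q ≠ 0 := ne_zero_iff.2 ⟨α, mem_support_iff.1 hαpq⟩
  refine le_antisymm (hαp ▸ ord0_le_degree hαpq) ?_
  simpa [h.le] using min_ord0_le_ord0_add hpq

theorem ord0_add_X_pow_of_totalDegree_le {i : Fin n} {m : ℕ} (hp : p ≠ 0)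
    (hdeg : p.totalDegree ≤ m) (hne : p + X i ^ m ≠ 0) : ord0 (p + X i ^ m) = ord0 p := by
  rcases (ord0_le_totalDegree hp |>.trans hdeg).lt_or_eq with hlt | heq
  · exact ord0_add_of_lt hp (by rwa [ord0_X_pow])
  · refine le_antisymm ?_ (by simpa [ord0_X_pow, heq] using min_ord0_le_ord0_add hne)
    calc ord0 (p + X i ^ m) ≤ (p + X i ^ m).totalDegree := ord0_le_totalDegree hne
      _ ≤ max p.totalDegree (X i ^ m : MvPolynomial (Fin n) ℂ).totalDegree := totalDegree_add _ _
      _ = ord0 p := by simp [totalDegree_X_pow, hdeg, heq]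

end Order

theorem stmt10_general (n : ℕ) (w : Fin n → ℕ) (hw : ∀ i, 1 ≤ w i) (d : ℕ)
    (f₀ : MvPolynomial (Fin n) ℂ) (hf₀ : f₀ ≠ 0)
    (hwh : MvPolynomial.IsWeightedHomogeneous w f₀ d)
    (i₀ : Fin n) (hi₀ : ∀ i, w i₀ ≤ w i)
    (m : ℕ) (hm : m = d / w i₀)
    (j₀ : ℕ) (g : ℕ → MvPolynomial (Fin n) ℂ)
    (f : ℂ → MvPolynomial (Fin n) ℂ)
    (hf : ∀ t : ℂ, f t = f₀ + ∑ j ∈ Finset.Icc 1 j₀, (t ^ j) • g j)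
    (ε₀ : ℝ) (hε₀ : 0 < ε₀)
    (hord : ∀ t : ℂ, ‖t‖ < ε₀ →
      f t + MvPolynomial.X i₀ ^ m ≠ 0 ∧
      ord0 (f t + MvPolynomial.X i₀ ^ m) = ord0 (f₀ + MvPolynomial.X i₀ ^ m)) :
    ∃ ε > 0, ∀ t : ℂ, ‖t‖ < ε → f t ≠ 0 ∧ ord0 (f t) = ord0 f₀ := by
  have hs : 0 ∉ Finset.Icc 1 j₀ := by simp
  have hdeg : f₀.totalDegree ≤ m := hm ▸ hwh.totalDegree_le_div (hw i₀) hi₀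
  have hf₀X : f₀ + X i₀ ^ m ≠ 0 := by
    simpa [hf, add_sum_zero_pow_smul f₀ g hs] using (hord 0 (by simpa using hε₀)).1
  have hf₀Xord := ord0_add_X_pow_of_totalDegree_le hf₀ hdeg hf₀X
  obtain ⟨α, hα, hαf₀⟩ := exists_degree_eq_ord0 hf₀
  have hnear : ∀ᶠ t in 𝓝 (0 : ℂ), coeff α (f t) ≠ 0 ∧ ‖t‖ < ε₀ := by
    simp only [hf]
    refine (eventually_coeff_add_sum_pow_smul_ne_zero f₀ g hs (mem_support_iff.1 hα)).and ?_
    filter_upwards [Metric.ball_mem_nhds (0 : ℂ) hε₀] with t ht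
    simpa using ht
  obtain ⟨ε, hε, hball⟩ := Metric.eventually_nhds_iff.1 hnear
  refine ⟨ε, hε, fun t ht => ?_⟩
  obtain ⟨hαt, htε₀⟩ := hball (by simpa using ht)
  have hft : f t ≠ 0 := ne_zero_iff.2 ⟨α, hαt⟩
  refine ⟨hft, le_antisymm (hαf₀ ▸ ord0_le_degree (mem_support_iff.2 hαt)) ?_⟩
  by_contra! hlt
  have hltm : ord0 (f t) < ord0 (X i₀ ^ m : MvPolynomial (Fin n) ℂ) := by
    rw [ord0_X_pow]
    exact hlt.trans_le ((ord0_le_totalDegree hf₀).trans hdeg)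
  have := (hord t htε₀).2
  rw [ord0_add_of_lt hft hltm, hf₀Xord] at this
  exact hlt.ne this

theorem stmt10 (n : ℕ) (hn : 1 ≤ n) (w : Fin n → ℕ) (hw : ∀ i, 1 ≤ w i) (d : ℕ)
    (f₀ : MvPolynomial (Fin n) ℂ) (hf₀ : f₀ ≠ 0)
    (hwh : MvPolynomial.IsWeightedHomogeneous w f₀ d)
    (i₀ : Fin n) (hi₀ : ∀ i, w i₀ ≤ w i) (hdvd : w i₀ ∣ d)
    (m : ℕ) (hm : m = d / w i₀)
    (j₀ : ℕ) (g : ℕ → MvPolynomial (Fin n) ℂ)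
    (f : ℂ → MvPolynomial (Fin n) ℂ)
    (hf : ∀ t : ℂ, f t = f₀ + ∑ j ∈ Finset.Icc 1 j₀, (t ^ j) • g j)
    (ε₀ : ℝ) (hε₀ : 0 < ε₀)
    (hord : ∀ t : ℂ, ‖t‖ < ε₀ →
      f t + MvPolynomial.X i₀ ^ m ≠ 0 ∧
      ord0 (f t + MvPolynomial.X i₀ ^ m) = ord0 (f₀ + MvPolynomial.X i₀ ^ m)) :
    ∃ ε > 0, ∀ t : ℂ, ‖t‖ < ε → f t ≠ 0 ∧ ord0 (f t) = ord0 f₀ :=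
  stmt10_general n w hw d f₀ hf₀ hwh i₀ hi₀ m hm j₀ g f hf ε₀ hε₀ hord
end

section
/- Consider the family of polynomials f_t := Z₁²Z₂² + Z₂⁵ + Z₃⁴ + t·Z₁Z₂² + t²·Z₁²Z₂² in MvPolynomial (Fin 3) ℂ. Then f₀ = Z₁²Z₂² + Z₂⁵ + Z₃⁴ is weighted homogeneous of degree 20 with respect to the weights (6, 4, 5), ord₀(f₀) = 4, and for every t ≠ 0, ord₀(f_t) = 3; in particular the family {f_t} is not equimultiple at the origin. -/
open MvPolynomial

theorem stmt11 (f : ℂ → MvPolynomial (Fin 3) ℂ)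
    (hf : ∀ t : ℂ, f t =
      X 0 ^ 2 * X 1 ^ 2 + X 1 ^ 5 + X 2 ^ 4
        + C t * (X 0 * X 1 ^ 2) + C (t ^ 2) * (X 0 ^ 2 * X 1 ^ 2)) :
    MvPolynomial.IsWeightedHomogeneous (![6, 4, 5] : Fin 3 → ℕ) (f 0) 20 ∧
    ord0 (f 0) = 4 ∧
    (∀ t : ℂ, t ≠ 0 → ord0 (f t) = 3) := by
  set A : Fin 3 →₀ ℕ := Finsupp.single 0 2 + Finsupp.single 1 2 with hA
  set B : Fin 3 →₀ ℕ := Finsupp.single 1 5 with hB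
  set D : Fin 3 →₀ ℕ := Finsupp.single 2 4 with hD
  set E : Fin 3 →₀ ℕ := Finsupp.single 0 1 + Finsupp.single 1 2 with hE
  have key : ∀ t : ℂ, f t = monomial A (1 + t ^ 2) + monomial B 1 + monomial D 1
      + monomial E t := by
    intro t
    have hX0 : (X 0 : MvPolynomial (Fin 3) ℂ) = monomial (Finsupp.single 0 1) 1 := by
      rw [← X_pow_eq_monomial, pow_one]
    rw [hf t, hA, hB, hD, hE]
    simp only [X_pow_eq_monomial]
    simp only [hX0]
    simp only [monomial_mul, C_mul_monomial, map_add, mul_one, one_mul]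
    ring
  have sumA : ∑ i, A i = 4 := by
    simp [hA, Fin.sum_univ_three, Finsupp.single_apply]
  have sumB : ∑ i, B i = 5 := by
    simp [hB, Fin.sum_univ_three, Finsupp.single_apply]
  have sumD : ∑ i, D i = 4 := by
    simp [hD, Fin.sum_univ_three, Finsupp.single_apply]
  have sumE : ∑ i, E i = 3 := by
    simp [hE, Fin.sum_univ_three, Finsupp.single_apply]
  have hAB : A ≠ B := by
    intro h; have := DFunLike.congr_fun h 0; simp [hA, hB, Finsupp.single_apply] at this
  have hAD : A ≠ D := by
    intro h; have := DFunLike.congr_fun h 0; simp [hA, hD, Finsupp.single_apply] at this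
  have hAE : A ≠ E := by
    intro h; have := DFunLike.congr_fun h 0; simp [hA, hE, Finsupp.single_apply] at this
  have hBE : B ≠ E := by
    intro h; have := DFunLike.congr_fun h 0; simp [hB, hE, Finsupp.single_apply] at this
  have hDE : D ≠ E := by
    intro h; have := DFunLike.congr_fun h 0; simp [hD, hE, Finsupp.single_apply] at this
  have hsupp : ∀ t : ℂ, ∀ α ∈ (f t).support, α = A ∨ α = B ∨ α = D ∨ α = E := by
    intro t α hα
    rw [mem_support_iff, key t] at hα
    simp only [coeff_add, coeff_monomial] at hα
    by_contra h
    push_neg at h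
    rw [if_neg (Ne.symm h.1), if_neg (Ne.symm h.2.1), if_neg (Ne.symm h.2.2.1),
      if_neg (Ne.symm h.2.2.2)] at hα
    simp at hα
  refine ⟨?_, ?_, ?_⟩
  · -- weighted homogeneous
    have : f 0 = monomial A 1 + monomial B 1 + monomial D 1 := by
      rw [key 0]; simp
    rw [this]
    refine IsWeightedHomogeneous.add (IsWeightedHomogeneous.add ?_ ?_) ?_ <;>
      apply isWeightedHomogeneous_monomial <;>
      simp [hA, hB, hD, Finsupp.weight_apply, Finsupp.sum_fintype,
        Fin.sum_univ_three, Finsupp.single_apply]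
  · -- ord0 (f 0) = 4
    have hmem : A ∈ (f 0).support := by
      rw [mem_support_iff, key 0]
      simp [coeff_monomial, Ne.symm hAB, Ne.symm hAD, Ne.symm hAE, hAB, hAD, hAE]
    have h4 : (4 : ℕ) ∈ ((fun α : Fin 3 →₀ ℕ => ∑ i, α i) '' (f 0).support) :=
      ⟨A, by simpa using hmem, sumA⟩
    refine le_antisymm (Nat.sInf_le h4) (le_csInf ⟨4, h4⟩ ?_)
    rintro m ⟨α, hα, rfl⟩
    rcases hsupp 0 α (by simpa using hα) with rfl | rfl | rfl | rfl
    · simp [sumA]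
    · simp [sumB]
    · simp [sumD]
    · -- α = E : coeff E (f 0) = 0, contradiction
      exfalso
      rw [Finset.mem_coe, mem_support_iff, key 0] at hα
      simp [coeff_monomial, hAE, hBE, hDE] at hα
  · -- t ≠ 0 case
    intro t ht
    have hmem : E ∈ (f t).support := by
      rw [mem_support_iff, key t]
      simp [coeff_monomial, hAE, hBE, hDE, ht]
    have h3 : (3 : ℕ) ∈ ((fun α : Fin 3 →₀ ℕ => ∑ i, α i) '' (f t).support) :=
      ⟨E, by simpa using hmem, sumE⟩
    refine le_antisymm (Nat.sInf_le h3) (le_csInf ⟨3, h3⟩ ?_)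
    rintro m ⟨α, hα, rfl⟩
    rcases hsupp t α (by simpa using hα) with rfl | rfl | rfl | rfl <;> simp [sumA, sumB, sumD, sumE]
end
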